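/- Let x be a real number. Then for every natural number n, u_n(x) = Σ_{k=0}^{⌊n/2⌋} C(n, 2k)·(−1)^k·x^{n−2k} and v_n(x) = Σ_{k=0}^{⌊n/2⌋} C(n, 2k+1)·(−1)^k·x^{n−2k−1}, where C(n, j) denotes the binomial coefficient. -/
import Mathlib


open Finset

/-- The sequence `u_n(x)`: `u_0 = 1`, `u_1 = x`, `u_n = 2x·u_{n-1} - (1+x²)·u_{n-2}`. -/
noncomputable def u (x : ℝ) : ℕ → ℝ
  | 0 => 1
  | 1 => x
  | (n + 2) => 2 * x * u x (n + 1) - (1 + x ^ 2) * u x n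

/-- The sequence `v_n(x)`: `v_0 = 0`, `v_1 = 1`, `v_n = 2x·v_{n-1} - (1+x²)·v_{n-2}`. -/
noncomputable def v (x : ℝ) : ℕ → ℝ
  | 0 => 0
  | 1 => 1
  | (n + 2) => 2 * x * v x (n + 1) - (1 + x ^ 2) * v x n

private lemma step (x : ℝ) (n : ℕ) :
    ((x : ℂ) + Complex.I) ^ (n + 2) =
      ((2 * x : ℝ) : ℂ) * ((x : ℂ) + Complex.I) ^ (n + 1)
        - ((1 + x ^ 2 : ℝ) : ℂ) * ((x : ℂ) + Complex.I) ^ n := by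
  have h2 : ((x : ℂ) + Complex.I) ^ 2 =
      ((2 * x : ℝ) : ℂ) * ((x : ℂ) + Complex.I) - ((1 + x ^ 2 : ℝ) : ℂ) := by
    have hI := Complex.I_sq
    push_cast
    ring_nf
    rw [hI]
    ring
  calc ((x : ℂ) + Complex.I) ^ (n + 2)
      = ((x : ℂ) + Complex.I) ^ n * ((x : ℂ) + Complex.I) ^ 2 := by ring
    _ = _ := by rw [h2]; ring

private lemma uv_complex (x : ℝ) (n : ℕ) :
    u x n = (((x : ℂ) + Complex.I) ^ n).re ∧
    v x n = (((x : ℂ) + Complex.I) ^ n).im := by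
  induction n using Nat.twoStepInduction with
  | zero => simp [u, v]
  | one => simp [u, v]
  | more n ih2 ih1 =>
    obtain ⟨hu1, hv1⟩ := ih1
    obtain ⟨hu2, hv2⟩ := ih2
    rw [step x n]
    constructor
    · show u x (n + 2) = _
      rw [u]
      simp [Complex.sub_re, Complex.re_ofReal_mul, ← Complex.ofReal_pow, hu1, hu2]
    · show v x (n + 2) = _
      rw [v]
      simp [Complex.sub_im, Complex.im_ofReal_mul, ← Complex.ofReal_pow, hv1, hv2]

private lemma sum_range_two_mul {M : Type*} [AddCommMonoid M] (m : ℕ) (f : ℕ → M) :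
    ∑ i ∈ Finset.range (2 * m), f i = ∑ k ∈ Finset.range m, (f (2 * k) + f (2 * k + 1)) := by
  induction m with
  | zero => simp
  | succ m ih =>
    rw [Finset.sum_range_succ, ← ih, Nat.mul_succ, Finset.sum_range_succ,
      Finset.sum_range_succ, add_assoc]

private lemma expand (x : ℝ) (n : ℕ) :
    ((x : ℂ) + Complex.I) ^ n =
      ∑ j ∈ Finset.range (n + 1),
        (((n.choose j : ℝ) * x ^ (n - j) : ℝ) : ℂ) * Complex.I ^ j := by
  rw [add_comm ((x : ℂ)) Complex.I, add_pow]
  refine Finset.sum_congr rfl fun j _ => ?_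
  push_cast
  ring

private lemma I_pow_even (k : ℕ) : Complex.I ^ (2 * k) = (((-1 : ℝ) ^ k : ℝ) : ℂ) := by
  rw [pow_mul, Complex.I_sq]
  push_cast
  ring

theorem u_v_closed_form (x : ℝ) (n : ℕ) :
    u x n = ∑ k ∈ Finset.range (n / 2 + 1),
      (Nat.choose n (2 * k) : ℝ) * (-1) ^ k * x ^ (n - 2 * k) ∧
    v x n = ∑ k ∈ Finset.range (n / 2 + 1),
      (Nat.choose n (2 * k + 1) : ℝ) * (-1) ^ k * x ^ (n - 2 * k - 1) := by
  obtain ⟨hu, hv⟩ := uv_complex x n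
  have hext : ((x : ℂ) + Complex.I) ^ n =
      ∑ j ∈ Finset.range (2 * (n / 2 + 1)),
        (((n.choose j : ℝ) * x ^ (n - j) : ℝ) : ℂ) * Complex.I ^ j := by
    rw [expand]
    refine Finset.sum_subset ?_ ?_
    · intro j hj
      simp only [Finset.mem_range] at *
      omega
    · intro j _ hj
      simp only [Finset.mem_range, not_lt] at hj
      rw [Nat.choose_eq_zero_of_lt (by omega)]
      simp
  rw [hext, sum_range_two_mul] at hu hv
  constructor
  · rw [hu, Complex.re_sum]
    refine Finset.sum_congr rfl fun k _ => ?_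
    rw [Complex.add_re, I_pow_even, pow_succ, I_pow_even]
    simp only [Complex.re_ofReal_mul, Complex.mul_re, Complex.ofReal_re, Complex.ofReal_im,
      Complex.I_re, Complex.I_im]
    ring
  · rw [hv, Complex.im_sum]
    refine Finset.sum_congr rfl fun k _ => ?_
    rw [Complex.add_im, I_pow_even, pow_succ, I_pow_even]
    simp only [Complex.im_ofReal_mul, Complex.mul_im, Complex.ofReal_re, Complex.ofReal_im,
      Complex.I_re, Complex.I_im]
    have : n - 2 * k - 1 = n - (2 * k + 1) := by omega
    rw [this]
    ring
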